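/- arXiv:1508.04218 — 4 statements merged into one kernel-verified Lean document; each statement's English description precedes it below -/
import Mathlib

section
/- Let E ⊂ ℝ^d be a bounded domain and 1 ≤ p < ∞. Suppose φ is a Schwartz function whose inverse Fourier transform φ^∨ is supported in B₁(0) and satisfies ∫ φ^∨(x) dx = 0. Then for every integer k, ‖(φ(2^{−k}·) χ̂_E)^∨‖_{L^p} ≲ |(∂E)_{2^{−k}}|^{1/p}, with implicit constant depending only on φ and p. -/
open MeasureTheory FourierTransform Metric
open scoped RealInnerProductSpace

/-!
Write `ψ = φ^∨` and `K_δ = (φ(δ·))^∨ = δ^{-d} ψ(·/δ)`. The operator is convolution with `K_δ`: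
`(φ(δ·) χ̂_E)^∨ = χ_E * K_δ`. Since `K_δ` is supported in `B_δ(0)` and has mean zero,
`(χ_E * K_δ)(x)` vanishes unless `B_δ(x)` meets `∂E` (otherwise `χ_E` is constant on that
connected ball), and everywhere `|χ_E * K_δ| ≤ ‖K_δ‖₁ = ‖ψ‖₁`. Hence the operator is pointwise
bounded by `‖ψ‖₁ χ_{(∂E)_δ}`, whose `L^p` norm is `‖ψ‖₁ |(∂E)_δ|^{1/p}`.
-/

theorem IsPreconnected.subset_or_subset_compl_of_disjoint_frontier {X : Type*}
    [TopologicalSpace X] {s t : Set X} (hs : IsPreconnected s) (h : Disjoint s (frontier t)) :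
    s ⊆ t ∨ s ⊆ tᶜ := by
  have hcover : s ⊆ interior t ∪ (closure t)ᶜ := fun y hy ↦ by
    by_contra hy'
    simp only [Set.mem_union, Set.mem_compl_iff, not_or, not_not] at hy'
    exact h.notMem_of_mem_left hy ⟨hy'.2, hy'.1⟩
  rcases hs.subset_or_subset isOpen_interior isClosed_closure.isOpen_compl
    (disjoint_compl_right.mono_left interior_subset_closure) hcover with hsub | hsub
  · exact Or.inl (hsub.trans interior_subset)
  · exact Or.inr (hsub.trans (Set.compl_subset_compl.2 subset_closure))

theorem eLpNorm_le_of_norm_le_indicator {X F : Type*} [MeasurableSpace X] {μ : Measure X}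
    [NormedAddCommGroup F] {f : X → F} {s : Set X} {M p : ℝ} (hs : MeasurableSet s)
    (hM : 0 ≤ M) (hp : 0 < p) (hf : ∀ x, ‖f x‖ ≤ s.indicator (fun _ ↦ M) x) :
    eLpNorm f (ENNReal.ofReal p) μ ≤ ENNReal.ofReal M * μ s ^ (1 / p) := by
  calc eLpNorm f (ENNReal.ofReal p) μ
      ≤ eLpNorm (s.indicator fun _ ↦ M) (ENNReal.ofReal p) μ := eLpNorm_mono_real hf
    _ = ENNReal.ofReal M * μ s ^ (1 / p) := by
        rw [eLpNorm_indicator_const hs (ENNReal.ofReal_pos.2 hp).ne' ENNReal.ofReal_ne_top,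
          ENNReal.toReal_ofReal hp.le, Real.enorm_of_nonneg hM]

section NormedSpace

variable {V E : Type*} [NormedAddCommGroup V] [NormedSpace ℝ V] [NormedAddCommGroup E]
  [NormedSpace ℝ E]

theorem indicator_eqOn_ball_of_notMem_thickening {M : Type*} [Zero M] {s : Set V} (c : M)
    {x : V} {r : ℝ} (hx : x ∉ thickening r (frontier s)) :
    ∀ y ∈ ball x r, s.indicator (fun _ ↦ c) y = s.indicator (fun _ ↦ c) x := by
  intro y hy
  have hxball : x ∈ ball x r := mem_ball_self (pos_of_mem_ball hy)
  have hdisj : Disjoint (ball x r) (frontier s) := Set.disjoint_left.2 fun z hz hzs ↦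
    hx (mem_thickening_iff.2 ⟨z, hzs, mem_ball'.1 hz⟩)
  rcases (convex_ball x r).isPreconnected.subset_or_subset_compl_of_disjoint_frontier hdisj
    with hsub | hsub
  · rw [Set.indicator_of_mem (hsub hy), Set.indicator_of_mem (hsub hxball)]
  · rw [Set.indicator_of_notMem (hsub hy), Set.indicator_of_notMem (hsub hxball)]

noncomputable def normalizedDilation (δ : ℝ) (f : V → E) : V → E :=
  fun z ↦ (δ ^ Module.finrank ℝ V)⁻¹ • f (δ⁻¹ • z)

theorem support_normalizedDilation_subset {δ r : ℝ} {f : V → E} (hδ : 0 < δ)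
    (hf : Function.support f ⊆ ball 0 r) :
    Function.support (normalizedDilation δ f) ⊆ ball 0 (δ * r) := fun z hz ↦ by
  have : δ⁻¹ • z ∈ ball (0 : V) r :=
    hf fun h0 ↦ hz (by simp only [normalizedDilation, h0, smul_zero])
  rw [mem_ball_zero_iff, norm_smul, Real.norm_eq_abs, abs_inv, abs_of_pos hδ] at this
  rw [mem_ball_zero_iff]
  rwa [inv_mul_lt_iff₀ hδ] at this

variable [MeasurableSpace V] [BorelSpace V] [FiniteDimensional ℝ V]
  (μ : Measure V) [μ.IsAddHaarMeasure]

section Dilation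

variable {δ : ℝ} {f : V → E}

theorem integral_normalizedDilation (hδ : 0 < δ) (f : V → E) :
    ∫ z, normalizedDilation δ f z ∂μ = ∫ z, f z ∂μ := by
  simp only [normalizedDilation]
  rw [integral_smul, Measure.integral_comp_inv_smul_of_nonneg _ _ hδ.le, smul_smul,
    inv_mul_cancel₀ (pow_ne_zero _ hδ.ne'), one_smul]

theorem integral_norm_normalizedDilation (hδ : 0 < δ) (f : V → E) :
    ∫ z, ‖normalizedDilation δ f z‖ ∂μ = ∫ z, ‖f z‖ ∂μ := by
  rw [← integral_normalizedDilation μ hδ (fun z ↦ ‖f z‖)]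
  congr with z
  simp [normalizedDilation, norm_smul, abs_of_pos hδ]

theorem MeasureTheory.Integrable.normalizedDilation (hf : Integrable f μ) (hδ : δ ≠ 0) :
    Integrable (normalizedDilation δ f) μ :=
  (hf.comp_smul (inv_ne_zero hδ)).smul _

end Dilation

section Convolution

variable {K f : V → ℂ} {x : V} {r : ℝ}

theorem integral_mul_sub_eq_zero_of_eqOn_ball (hK : Function.support K ⊆ ball 0 r)
    (hK₀ : ∫ z, K z ∂μ = 0) (hf : ∀ y ∈ ball x r, f y = f x) :
    ∫ y, f y * K (x - y) ∂μ = 0 := by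
  have hfreeze : ∀ y, f y * K (x - y) = f x * K (x - y) := fun y ↦ by
    by_cases hy : x - y ∈ ball 0 r
    · rw [hf y (by rwa [mem_ball_zero_iff, ← dist_eq_norm, dist_comm] at hy)]
    · rw [Function.notMem_support.1 fun h ↦ hy (hK h), mul_zero, mul_zero]
  simp_rw [hfreeze]
  rw [integral_const_mul, integral_sub_left_eq_self (fun z ↦ K z) μ x, hK₀, mul_zero]

theorem norm_integral_mul_sub_le (hK : Integrable K μ) (hf : ∀ y, ‖f y‖ ≤ 1) :
    ‖∫ y, f y * K (x - y) ∂μ‖ ≤ ∫ z, ‖K z‖ ∂μ := by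
  calc ‖∫ y, f y * K (x - y) ∂μ‖ ≤ ∫ y, ‖K (x - y)‖ ∂μ :=
        norm_integral_le_of_norm_le (hK.comp_sub_left x).norm
          (Filter.Eventually.of_forall fun y ↦ by
            rw [norm_mul]; exact mul_le_of_le_one_left (norm_nonneg _) (hf y))
    _ = ∫ z, ‖K z‖ ∂μ := integral_sub_left_eq_self (fun z ↦ ‖K z‖) μ x

theorem norm_integral_indicator_mul_sub_le (s : Set V) (hKi : Integrable K μ)
    (hK : Function.support K ⊆ ball 0 r) (hK₀ : ∫ z, K z ∂μ = 0) (x : V) :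
    ‖∫ y, s.indicator (fun _ ↦ (1 : ℂ)) y * K (x - y) ∂μ‖ ≤
      (thickening r (frontier s)).indicator (fun _ ↦ ∫ z, ‖K z‖ ∂μ) x := by
  by_cases hx : x ∈ thickening r (frontier s)
  · rw [Set.indicator_of_mem hx]
    refine norm_integral_mul_sub_le μ hKi fun y ↦ ?_
    by_cases hy : y ∈ s <;> simp [hy]
  · rw [Set.indicator_of_notMem hx, integral_mul_sub_eq_zero_of_eqOn_ball μ hK hK₀
      (indicator_eqOn_ball_of_notMem_thickening 1 hx), norm_zero]

end Convolution

end NormedSpace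

section Fourier

variable {V E : Type*} [NormedAddCommGroup V] [InnerProductSpace ℝ V] [FiniteDimensional ℝ V]
  [MeasurableSpace V] [BorelSpace V] [NormedAddCommGroup E] [NormedSpace ℂ E]

theorem fourierInv_comp_smul (g : V → E) {δ : ℝ} (hδ : 0 < δ) :
    𝓕⁻ (fun ξ ↦ g (δ • ξ)) = normalizedDilation δ (𝓕⁻ g) := by
  ext z
  have hphase : ∀ ξ : V, ⟪δ • ξ, δ⁻¹ • z⟫ = ⟪ξ, z⟫ := fun ξ ↦ by
    rw [real_inner_smul_left, real_inner_smul_right, ← mul_assoc, mul_inv_cancel₀ hδ.ne',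
      one_mul]
  simp only [Real.fourierInv_eq, normalizedDilation, ← hphase]
  exact Measure.integral_comp_smul_of_nonneg volume (fun η ↦ 𝐞 ⟪η, δ⁻¹ • z⟫ • g η) δ
    (hR := hδ.le)

theorem fourierInv_mul_fourier_eq_integral {f g : V → ℂ} (hf : Integrable f) (hg : Integrable g)
    (x : V) : 𝓕⁻ (fun ξ ↦ g ξ * 𝓕 f ξ) x = ∫ y, f y * 𝓕⁻ g (x - y) := by
  have hg' : Integrable (fun ξ ↦ 𝐞 ⟪ξ, x⟫ • g ξ) := by
    simpa using (Real.fourierIntegral_convergent_iff (-x)).2 hg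
  have self_adjoint := VectorFourier.integral_fourierIntegral_smul_eq_flip (L := innerₗ V)
    (e := Real.fourierChar) (μ := volume) Real.continuous_fourierChar continuous_inner hf hg'
  simp only [VectorFourier.fourierIntegral, LinearMap.flip_apply, innerₗ_apply_apply, smul_smul,
    ← AddChar.map_add_eq_mul] at self_adjoint
  calc 𝓕⁻ (fun ξ ↦ g ξ * 𝓕 f ξ) x = ∫ ξ, 𝓕 f ξ • 𝐞 ⟪ξ, x⟫ • g ξ := by
        rw [Real.fourierInv_eq]
        congr with ξ
        simp only [Circle.smul_def, smul_eq_mul]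
        ring
    _ = ∫ y, f y • ∫ ξ, 𝐞 (-⟪y, ξ⟫ + ⟪ξ, x⟫) • g ξ := self_adjoint
    _ = ∫ y, f y * 𝓕⁻ g (x - y) := by
        congr with y
        rw [Real.fourierInv_eq, smul_eq_mul]
        congr with ξ
        rw [inner_sub_right, real_inner_comm, sub_eq_neg_add]

end Fourier

theorem stmt4_general (d : ℕ) (p : ℝ) (hp : 1 ≤ p)
    (E : Set (EuclideanSpace ℝ (Fin d)))
    (hEopen : IsOpen E) (hEbdd : Bornology.IsBounded E)
    (φ : SchwartzMap (EuclideanSpace ℝ (Fin d)) ℂ)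
    (hsupp : Function.support (𝓕⁻ (⇑φ)) ⊆ Metric.ball 0 1)
    (hmean : (∫ x : EuclideanSpace ℝ (Fin d), 𝓕⁻ (⇑φ) x) = 0) :
    ∃ C : ℝ, 0 < C ∧ ∀ k : ℤ,
      eLpNorm (𝓕⁻ (fun ξ : EuclideanSpace ℝ (Fin d) =>
          φ ((2:ℝ) ^ (-k) • ξ) * 𝓕 (E.indicator fun _ => (1:ℂ)) ξ))
        (ENNReal.ofReal p) volume
        ≤ ENNReal.ofReal C *
          (volume (thickening ((2:ℝ) ^ (-k)) (frontier E))) ^ (1/p) := by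
  have hψ : Integrable (𝓕⁻ ⇑φ) := SchwartzMap.fourierInv_coe φ ▸ (𝓕⁻ φ).integrable
  set ψ := 𝓕⁻ ⇑φ
  have hψnorm : 0 ≤ ∫ z, ‖ψ z‖ := integral_nonneg fun _ ↦ norm_nonneg _
  refine ⟨(∫ z, ‖ψ z‖) + 1, by linarith, fun k ↦ ?_⟩
  set δ : ℝ := 2 ^ (-k)
  have hδ : 0 < δ := by positivity
  have hχ : Integrable (E.indicator fun _ ↦ (1 : ℂ)) :=
    (integrable_indicator_iff hEopen.measurableSet).2
      (integrableOn_const hEbdd.measure_lt_top.ne)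
  have hpointwise : ∀ x, ‖𝓕⁻ (fun ξ ↦ φ (δ • ξ) * 𝓕 (E.indicator fun _ ↦ (1 : ℂ)) ξ) x‖ ≤
      (thickening δ (frontier E)).indicator (fun _ ↦ ∫ z, ‖ψ z‖) x := fun x ↦ by
    rw [fourierInv_mul_fourier_eq_integral hχ (φ.integrable.comp_smul hδ.ne'),
      fourierInv_comp_smul _ hδ, ← integral_norm_normalizedDilation volume hδ]
    refine norm_integral_indicator_mul_sub_le volume E (hψ.normalizedDilation volume hδ.ne')
      ?_ (by rw [integral_normalizedDilation volume hδ, hmean]) x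
    simpa using support_normalizedDilation_subset hδ hsupp
  calc _ ≤ ENNReal.ofReal (∫ z, ‖ψ z‖) * volume (thickening δ (frontier E)) ^ (1 / p) :=
        eLpNorm_le_of_norm_le_indicator isOpen_thickening.measurableSet hψnorm (by linarith)
          hpointwise
    _ ≤ _ := by gcongr; linarith

/-- Let `E ⊂ ℝ^d` be a bounded domain and `1 ≤ p < ∞`. If `φ` is Schwartz with
`φ^∨` supported in `B₁(0)` and `∫ φ^∨ = 0`, then for every `k ∈ ℤ`,
`‖(φ(2^{-k}·) χ̂_E)^∨‖_p ≲ |(∂E)_{2^{-k}}|^{1/p}`. -/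
theorem stmt4 (d : ℕ) (hd : 0 < d) (p : ℝ) (hp : 1 ≤ p)
    (E : Set (EuclideanSpace ℝ (Fin d)))
    (hEopen : IsOpen E) (hEconn : IsConnected E) (hEbdd : Bornology.IsBounded E)
    (φ : SchwartzMap (EuclideanSpace ℝ (Fin d)) ℂ)
    (hsupp : Function.support (𝓕⁻ (⇑φ)) ⊆ Metric.ball 0 1)
    (hmean : (∫ x : EuclideanSpace ℝ (Fin d), 𝓕⁻ (⇑φ) x) = 0) :
    ∃ C : ℝ, 0 < C ∧ ∀ k : ℤ,
      eLpNorm (𝓕⁻ (fun ξ : EuclideanSpace ℝ (Fin d) =>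
          φ ((2:ℝ) ^ (-k) • ξ) * 𝓕 (E.indicator fun _ => (1:ℂ)) ξ))
        (ENNReal.ofReal p) volume
        ≤ ENNReal.ofReal C *
          (volume (thickening ((2:ℝ) ^ (-k)) (frontier E))) ^ (1/p) :=
  stmt4_general d p hp E hEopen hEbdd φ hsupp hmean
end

section
/- Let E ⊂ ℝ^d be a bounded domain, let φ be Schwartz with φ^∨ supported in B₁(0) and ∫φ^∨ = 0, and define P_k by (P_k f)^ = φ²(2^{−k}·) f̂. Then for 1 ≤ p < ∞ and all integers k, ‖P_k χ_E‖_{L^p} ≲ |(∂E)_{2^{−k+1}}|^{1/p}. -/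
/-!
`P_k χ_E` is the convolution of `χ_E` with `ψ_k(x) = 2^{kd} χ(2^k x)`, where
`χ = φ^∨ * φ^∨` is integrable, has integral zero and is supported in `B₂(0)`; hence `ψ_k` is
supported in `B_{2^{-k+1}}(0)` and `‖ψ_k‖₁ = ‖χ‖₁`. If `x` lies outside `(∂E)_{2^{-k+1}}`, the
connected ball `B(x, 2^{-k+1})` misses `∂E`, so it lies in `E` or in its complement, and
`(χ_E * ψ_k)(x)` is `∫ ψ_k = 0` or `0`. Elsewhere it is bounded by `‖χ‖₁`, so
`|P_k χ_E| ≤ ‖χ‖₁ · χ_{(∂E)_{2^{-k+1}}}` pointwise.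
-/

open MeasureTheory FourierTransform Metric Function Set ContinuousLinearMap
open scoped Convolution RealInnerProductSpace Pointwise SchwartzMap

theorem IsPreconnected.subset_or_disjoint_of_disjoint_frontier {X : Type*} [TopologicalSpace X]
    {s E : Set X} (hs : IsPreconnected s) (h : Disjoint s (frontier E)) :
    s ⊆ E ∨ Disjoint s E := by
  have hcover : s ⊆ interior E ∪ (closure E)ᶜ := fun y hy => by
    by_cases hyE : y ∈ closure E
    · exact .inl (by_contra fun hyi => h.notMem_of_mem_left hy ⟨hyE, hyi⟩)
    · exact .inr hyE
  rcases hs.subset_or_subset isOpen_interior isClosed_closure.isOpen_compl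
    (disjoint_compl_right.mono_left interior_subset_closure) hcover with hint | hext
  · exact .inl (hint.trans interior_subset)
  · exact .inr (disjoint_compl_left.mono hext subset_closure)

section Convolution

variable {G : Type*} [NormedAddCommGroup G] [NormedSpace ℝ G] [MeasurableSpace G]
  [BorelSpace G] {μ : Measure G} [μ.IsAddLeftInvariant] [μ.IsNegInvariant]

theorem norm_indicator_convolution_le {E : Set G} {ψ : G → ℂ} {r : ℝ} (hψ : Integrable ψ μ)
    (hψ0 : ∫ z, ψ z ∂μ = 0) (hsupp : support ψ ⊆ ball 0 r) (x : G) :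
    ‖(E.indicator (fun _ => 1) ⋆[mul ℂ ℂ, μ] ψ) x‖
      ≤ (thickening r (frontier E)).indicator (fun _ => ∫ z, ‖ψ z‖ ∂μ) x := by
  rw [convolution_mul]
  by_cases hx : x ∈ thickening r (frontier E)
  · rw [indicator_of_mem hx, ← integral_sub_left_eq_self (fun z => ‖ψ z‖) μ x]
    refine (norm_integral_le_integral_norm _).trans
      (integral_mono_of_nonneg (.of_forall fun _ => norm_nonneg _)
        (hψ.norm.comp_sub_left x) (.of_forall fun y => ?_))
    simpa [norm_mul] using mul_le_of_le_one_left (norm_nonneg (ψ (x - y)))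
      (norm_indicator_le_norm_self (fun _ => (1 : ℂ)) y |>.trans (by simp))
  rw [indicator_of_notMem hx]
  have hball : Disjoint (ball x r) (frontier E) := disjoint_left.2 fun y hy hyE =>
    hx (mem_thickening_iff.2 ⟨y, hyE, mem_ball'.1 hy⟩)
  have hnear : ∀ y, ψ (x - y) ≠ 0 → y ∈ ball x r := fun y hy => by
    simpa [dist_eq_norm, norm_sub_rev] using hsupp hy
  rcases (convex_ball x r).isPreconnected.subset_or_disjoint_of_disjoint_frontier hball
    with hE | hE
  · have heq : ∀ y, E.indicator (fun _ => 1) y * ψ (x - y) = ψ (x - y) := fun y => by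
      by_cases hy : ψ (x - y) = 0
      · simp [hy]
      · simp [indicator_of_mem (hE (hnear y hy))]
    simp_rw [heq, integral_sub_left_eq_self ψ μ x, hψ0, norm_zero, le_refl]
  · have heq : ∀ y, E.indicator (fun _ => 1) y * ψ (x - y) = 0 := fun y => by
      by_cases hy : ψ (x - y) = 0
      · simp [hy]
      · simp [indicator_of_notMem (hE.notMem_of_mem_left (hnear y hy))]
    simp_rw [heq, integral_zero, norm_zero, le_refl]

theorem eLpNorm_indicator_convolution_le {E : Set G} {ψ : G → ℂ} {r : ℝ} (hψ : Integrable ψ μ)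
    (hψ0 : ∫ z, ψ z ∂μ = 0) (hsupp : support ψ ⊆ ball 0 r) {p : ENNReal} (hp : p ≠ 0)
    (hp_top : p ≠ ⊤) :
    eLpNorm (E.indicator (fun _ => 1) ⋆[mul ℂ ℂ, μ] ψ) p μ
      ≤ ‖∫ z, ‖ψ z‖ ∂μ‖ₑ * μ (thickening r (frontier E)) ^ (1 / p.toReal) := by
  rw [← eLpNorm_indicator_const isOpen_thickening.measurableSet hp hp_top]
  exact eLpNorm_mono_real (norm_indicator_convolution_le hψ hψ0 hsupp)

end Convolution

section Dilation

variable {G : Type*} [NormedAddCommGroup G] [NormedSpace ℝ G]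

noncomputable def dilate (c : ℝ) (h : G → ℂ) (x : G) : ℂ :=
  (c ^ Module.finrank ℝ G)⁻¹ • h (c⁻¹ • x)

theorem dilate_eq_smul (c : ℝ) (h : G → ℂ) :
    dilate c h = (c ^ Module.finrank ℝ G)⁻¹ • fun x => h (c⁻¹ • x) := rfl

theorem support_dilate {c : ℝ} (hc : c ≠ 0) (h : G → ℂ) :
    support (dilate c h) = c • support h := by
  rw [dilate_eq_smul, support_const_smul_of_ne_zero _ _ (inv_ne_zero (pow_ne_zero _ hc)),
    support_comp_inv_smul₀ hc]

variable [FiniteDimensional ℝ G] [MeasurableSpace G] [BorelSpace G] {μ : Measure G}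
  [μ.IsAddHaarMeasure]

theorem MeasureTheory.Integrable.dilate {h : G → ℂ} (hh : Integrable h μ) {c : ℝ} (hc : c ≠ 0) :
    Integrable (dilate c h) μ := by
  rw [dilate_eq_smul]
  exact (hh.comp_smul (inv_ne_zero hc)).smul _

theorem integral_dilate {c : ℝ} (hc : 0 < c) (h : G → ℂ) :
    ∫ x, dilate c h x ∂μ = ∫ x, h x ∂μ := by
  simp_rw [dilate]
  rw [integral_smul, Measure.integral_comp_inv_smul_of_nonneg μ h hc.le,
    inv_smul_smul₀ (pow_ne_zero _ hc.ne')]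

theorem integral_norm_dilate {c : ℝ} (hc : 0 < c) (h : G → ℂ) :
    ∫ x, ‖dilate c h x‖ ∂μ = ∫ x, ‖h x‖ ∂μ := by
  simp_rw [dilate, norm_smul, norm_inv, norm_pow, Real.norm_of_nonneg hc.le]
  rw [integral_const_mul, Measure.integral_comp_inv_smul_of_nonneg μ (‖h ·‖) hc.le,
    smul_eq_mul, inv_mul_cancel_left₀ (pow_ne_zero _ hc.ne')]

end Dilation

section Fourier

variable {V : Type*} [NormedAddCommGroup V] [InnerProductSpace ℝ V] [FiniteDimensional ℝ V]
  [MeasurableSpace V] [BorelSpace V]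

theorem fourierInv_mul_fourier_eq_convolution {f g : V → ℂ} (hf : Integrable f)
    (hg : Integrable g) : 𝓕⁻ (fun ξ => g ξ * 𝓕 f ξ) = f ⋆[mul ℂ ℂ] 𝓕⁻ g := by
  ext x
  have hchar : ∀ ξ t : V, (𝐞 ⟪ξ, x⟫ : ℂ) * 𝐞 (-⟪t, ξ⟫) = 𝐞 ⟪ξ, x - t⟫ := fun ξ t => by
    rw [← Circle.coe_mul, ← AddChar.map_add_eq_mul, inner_sub_right, real_inner_comm t ξ,
      sub_eq_add_neg]
  have hint : Integrable (fun z : V × V => (𝐞 ⟪z.1, x - z.2⟫ : ℂ) * (g z.1 * f z.2))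
      (volume.prod volume) :=
    (hg.mul_prod hf).bdd_mul (by fun_prop) (.of_forall fun z => (Circle.norm_coe _).le)
  calc 𝓕⁻ (fun ξ => g ξ * 𝓕 f ξ) x
      = ∫ ξ, ∫ t, (𝐞 ⟪ξ, x - t⟫ : ℂ) * (g ξ * f t) := by
        simp_rw [Real.fourierInv_eq, Real.fourier_eq, Circle.smul_def, smul_eq_mul,
          ← integral_const_mul]
        congr 1 with ξ; congr 1 with t
        rw [← hchar]; ring
    _ = ∫ t, ∫ ξ, (𝐞 ⟪ξ, x - t⟫ : ℂ) * (g ξ * f t) := integral_integral_swap hint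
    _ = (f ⋆[mul ℂ ℂ] 𝓕⁻ g) x := by
        simp_rw [convolution_mul, Real.fourierInv_eq, Circle.smul_def, smul_eq_mul,
          ← integral_const_mul]
        congr 1 with t; congr 1 with ξ
        ring

theorem fourierInv_comp_smul_s5 {c : ℝ} (hc : 0 < c) (w : V → ℂ) :
    𝓕⁻ (fun ξ => w (c • ξ)) = dilate c (𝓕⁻ w) := by
  ext x
  have hinner : ∀ ξ : V, ⟪ξ, x⟫ = ⟪c • ξ, c⁻¹ • x⟫ := fun ξ => by
    rw [real_inner_smul_left, real_inner_smul_right, mul_inv_cancel_left₀ hc.ne']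
  simp_rw [dilate, Real.fourierInv_eq, hinner]
  exact Measure.integral_comp_smul_of_nonneg volume (fun η => 𝐞 ⟪η, c⁻¹ • x⟫ • w η) c
    (hR := hc.le)

namespace SchwartzMap

theorem integrable_fourierInv (φ : 𝓢(V, ℂ)) : Integrable (𝓕⁻ ⇑φ) := by
  rw [← fourierInv_coe]
  exact (𝓕⁻ φ).integrable

theorem integrable_sq (φ : 𝓢(V, ℂ)) : Integrable fun ξ => φ ξ ^ 2 := by
  simpa [sq, pairing_apply] using (pairing (mul ℂ ℂ) φ φ).integrable (μ := volume)

theorem fourierInv_sq_eq_convolution (φ : 𝓢(V, ℂ)) :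
    𝓕⁻ (fun ξ => φ ξ ^ 2) = 𝓕⁻ ⇑φ ⋆[mul ℂ ℂ] 𝓕⁻ ⇑φ := by
  have hinv : 𝓕 (𝓕⁻ ⇑φ) = ⇑φ := by
    rw [← fourierInv_coe, ← fourier_coe, fourier_fourierInv_eq]
  rw [← fourierInv_mul_fourier_eq_convolution φ.integrable_fourierInv φ.integrable, hinv]
  simp_rw [sq]

theorem integrable_fourierInv_sq (φ : 𝓢(V, ℂ)) : Integrable (𝓕⁻ fun ξ => φ ξ ^ 2) := by
  rw [fourierInv_sq_eq_convolution]
  exact φ.integrable_fourierInv.integrable_convolution _ φ.integrable_fourierInv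

theorem integral_fourierInv_sq_eq_zero (φ : 𝓢(V, ℂ)) (hmean : ∫ x, 𝓕⁻ ⇑φ x = 0) :
    ∫ x, 𝓕⁻ (fun ξ => φ ξ ^ 2) x = 0 := by
  rw [fourierInv_sq_eq_convolution,
    integral_convolution _ φ.integrable_fourierInv φ.integrable_fourierInv, hmean, map_zero]

theorem support_fourierInv_sq_subset (φ : 𝓢(V, ℂ)) {r : ℝ} (hr : 0 < r)
    (hsupp : support (𝓕⁻ ⇑φ) ⊆ ball 0 r) : support (𝓕⁻ fun ξ => φ ξ ^ 2) ⊆ ball 0 (r + r) := by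
  rw [fourierInv_sq_eq_convolution, ← add_zero (0 : V), ← ball_add_ball hr hr]
  exact (support_convolution_subset (L := mul ℂ ℂ)).trans (add_subset_add hsupp hsupp)

end SchwartzMap

end Fourier

theorem stmt5_general (d : ℕ) (p : ℝ) (hp : 1 ≤ p)
    (E : Set (EuclideanSpace ℝ (Fin d)))
    (hEopen : IsOpen E) (hEbdd : Bornology.IsBounded E)
    (φ : SchwartzMap (EuclideanSpace ℝ (Fin d)) ℂ)
    (hsupp : Function.support (𝓕⁻ (⇑φ)) ⊆ Metric.ball 0 1)
    (hmean : (∫ x : EuclideanSpace ℝ (Fin d), 𝓕⁻ (⇑φ) x) = 0) :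
    ∃ C : ℝ, 0 < C ∧ ∀ k : ℤ,
      eLpNorm (𝓕⁻ (fun ξ : EuclideanSpace ℝ (Fin d) =>
          (φ ((2:ℝ) ^ (-k) • ξ)) ^ 2 * 𝓕 (E.indicator fun _ => (1:ℂ)) ξ))
        (ENNReal.ofReal p) volume
        ≤ ENNReal.ofReal C *
          (volume (thickening ((2:ℝ) ^ (-k + 1)) (frontier E))) ^ (1/p) := by
  set χ := 𝓕⁻ fun ξ : EuclideanSpace ℝ (Fin d) => φ ξ ^ 2
  have hind : Integrable (E.indicator fun _ => (1:ℂ)) :=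
    (integrable_indicator_iff hEopen.measurableSet).2 (integrableOn_const hEbdd.measure_lt_top.ne)
  refine ⟨(∫ x, ‖χ x‖) + 1, by positivity, fun k => ?_⟩
  set c : ℝ := 2 ^ (-k)
  have hc : 0 < c := by positivity
  have hPk : 𝓕⁻ (fun ξ => φ (c • ξ) ^ 2 * 𝓕 (E.indicator fun _ => (1:ℂ)) ξ)
      = E.indicator (fun _ => 1) ⋆[mul ℂ ℂ] dilate c χ := by
    rw [fourierInv_mul_fourier_eq_convolution hind (φ.integrable_sq.comp_smul hc.ne'),
      fourierInv_comp_smul_s5 hc (fun ξ => φ ξ ^ 2)]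
  have hsupp_c : support (dilate c χ) ⊆ ball 0 (2 ^ (-k + 1)) := calc
    support (dilate c χ) = c • support χ := support_dilate hc.ne' χ
    _ ⊆ c • ball 0 (1 + 1) := smul_set_mono (φ.support_fourierInv_sq_subset one_pos hsupp)
    _ = ball 0 (2 ^ (-k + 1)) := by
      rw [_root_.smul_ball hc.ne', smul_zero, Real.norm_of_nonneg hc.le, zpow_add_one₀ two_ne_zero,
        one_add_one_eq_two]
  rw [hPk]
  calc _ ≤ _ := eLpNorm_indicator_convolution_le (φ.integrable_fourierInv_sq.dilate hc.ne')
        (by rw [integral_dilate hc, φ.integral_fourierInv_sq_eq_zero hmean]) hsupp_c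
        (by positivity) ENNReal.ofReal_ne_top
    _ ≤ _ := by
      rw [integral_norm_dilate hc, ENNReal.toReal_ofReal (by positivity),
        Real.enorm_eq_ofReal (by positivity)]
      gcongr
      linarith

/-- With `E` a bounded domain, `φ` Schwartz with `φ^∨` supported in `B₁(0)` and
`∫ φ^∨ = 0`, and `P_k` defined by `(P_k f)^ = φ²(2^{-k}·) f̂`, one has for `1 ≤ p < ∞` and
all `k ∈ ℤ`: `‖P_k χ_E‖_p ≲ |(∂E)_{2^{-k+1}}|^{1/p}`. -/
theorem stmt5 (d : ℕ) (hd : 0 < d) (p : ℝ) (hp : 1 ≤ p)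
    (E : Set (EuclideanSpace ℝ (Fin d)))
    (hEopen : IsOpen E) (hEconn : IsConnected E) (hEbdd : Bornology.IsBounded E)
    (φ : SchwartzMap (EuclideanSpace ℝ (Fin d)) ℂ)
    (hsupp : Function.support (𝓕⁻ (⇑φ)) ⊆ Metric.ball 0 1)
    (hmean : (∫ x : EuclideanSpace ℝ (Fin d), 𝓕⁻ (⇑φ) x) = 0) :
    ∃ C : ℝ, 0 < C ∧ ∀ k : ℤ,
      eLpNorm (𝓕⁻ (fun ξ : EuclideanSpace ℝ (Fin d) =>
          (φ ((2:ℝ) ^ (-k) • ξ)) ^ 2 * 𝓕 (E.indicator fun _ => (1:ℂ)) ξ))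
        (ENNReal.ofReal p) volume
        ≤ ENNReal.ofReal C *
          (volume (thickening ((2:ℝ) ^ (-k + 1)) (frontier E))) ^ (1/p) :=
  stmt5_general d p hp E hEopen hEbdd φ hsupp hmean
end

section
/- Let 0 < s < 1, 1 ≤ q < ∞, and let E ⊂ ℝ^d be measurable with |E| < ∞. If ∫₀¹ δ^{−qs} |(∂E)_δ| dδ/δ < ∞, then χ_E belongs to the fractional Sobolev space W^q_s(ℝ^d). -/
/-!
`‖χ_E(· + t) - χ_E‖_q^q = |(E - t) Δ E|`, and the segment from a point of this symmetric
difference to its translate crosses `∂E`, so `(E - t) Δ E ⊆ (∂E)_δ` for every `δ > |t|`.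
Averaging `|(∂E)_δ|` against `δ^(-d-qs-1)` over `δ ∈ (|t|, 2|t|)` therefore dominates
`|t|^(-d-qs) |(E - t) Δ E|`, and Tonelli (with `|{t : |t| < δ}| = c δ^d`) bounds the Gagliardo
integral over `|t| < 1/2` by the hypothesis. For `|t| ≥ 1/2` one uses `|(E - t) Δ E| ≤ 2|E|`
and the integrability of `|t|^(-d-qs)` at infinity.
-/

open MeasureTheory Metric Set
open scoped ENNReal

theorem IsPreconnected.inter_frontier_nonempty {X : Type*} [TopologicalSpace X] {s t : Set X}
    (hs : IsPreconnected s) (hst : (s ∩ t).Nonempty) (hst' : (s \ t).Nonempty) :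
    (s ∩ frontier t).Nonempty := by
  by_contra h
  have hcover : s ⊆ interior t ∪ (closure t)ᶜ := fun x hx => by
    by_contra hx'
    simp only [mem_union, mem_compl_iff, not_or, not_not] at hx'
    exact h ⟨x, hx, hx'.2, hx'.1⟩
  obtain ⟨x, hxs, hxt⟩ := hst
  obtain ⟨y, hys, hyt⟩ := hst'
  obtain ⟨z, -, hzt, hzt'⟩ := hs _ _ isOpen_interior isClosed_closure.isOpen_compl hcover
    ⟨x, hxs, (hcover hxs).resolve_right (not_not.2 (subset_closure hxt))⟩
    ⟨y, hys, (hcover hys).resolve_left fun hy => hyt (interior_subset hy)⟩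
  exact hzt' (interior_subset.trans subset_closure hzt)

theorem symmDiff_preimage_add_subset_cthickening {V : Type*} [NormedAddCommGroup V]
    [NormedSpace ℝ V] (E : Set V) (t : V) :
    symmDiff ((· + t) ⁻¹' E) E ⊆ cthickening ‖t‖ (frontier E) := by
  intro x hx
  have hseg : segment ℝ x (x + t) ⊆ closedBall x ‖t‖ :=
    (convex_closedBall x ‖t‖).segment_subset (mem_closedBall_self (norm_nonneg t))
      (by simp [mem_closedBall, dist_eq_norm])
  have hpre : IsPreconnected (segment ℝ x (x + t)) := (convex_segment _ _).isPreconnected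
  obtain ⟨z, hz, hzE⟩ : (segment ℝ x (x + t) ∩ frontier E).Nonempty := by
    rcases hx with ⟨hxt, hx⟩ | ⟨hx, hxt⟩
    · rw [← frontier_compl]
      exact hpre.inter_frontier_nonempty ⟨x, left_mem_segment ℝ _ _, hx⟩
        ⟨x + t, right_mem_segment ℝ _ _, not_not.2 hxt⟩
    · exact hpre.inter_frontier_nonempty ⟨x, left_mem_segment ℝ _ _, hx⟩
        ⟨x + t, right_mem_segment ℝ _ _, hxt⟩
  exact mem_cthickening_of_dist_le x z ‖t‖ _ hzE (dist_comm x z ▸ hseg hz)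

theorem eLpNorm_indicator_sub_indicator_rpow {α : Type*} [MeasurableSpace α] {μ : Measure α}
    {A B : Set α} (hA : MeasurableSet A) (hB : MeasurableSet B) {q : ℝ} (hq : 0 < q) :
    eLpNorm (fun x => A.indicator (fun _ => (1 : ℝ)) x - B.indicator (fun _ => 1) x)
      (ENNReal.ofReal q) μ ^ q = μ (symmDiff A B) := by
  have hnorm : ∀ x, ‖A.indicator (fun _ => (1 : ℝ)) x - B.indicator (fun _ => 1) x‖ =
      ‖(symmDiff A B).indicator (fun _ => (1 : ℝ)) x‖ := fun x => by
    by_cases hxA : x ∈ A <;> by_cases hxB : x ∈ B <;> simp [mem_symmDiff, hxA, hxB]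
  rw [eLpNorm_congr_norm_ae (Filter.Eventually.of_forall hnorm),
    eLpNorm_indicator_const (hA.symmDiff hB) (by positivity) ENNReal.ofReal_ne_top,
    ENNReal.toReal_ofReal hq.le, enorm_one, one_mul, ← ENNReal.rpow_mul,
    one_div_mul_cancel hq.ne', ENNReal.rpow_one]

theorem measure_symmDiff_preimage_add_le {G : Type*} [MeasurableSpace G] [AddGroup G]
    [MeasurableAdd G] (μ : Measure G) [μ.IsAddRightInvariant] (E : Set G) (t : G) :
    μ (symmDiff ((· + t) ⁻¹' E) E) ≤ 2 * μ E :=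
  calc μ (symmDiff ((· + t) ⁻¹' E) E) ≤ μ ((· + t) ⁻¹' E) + μ E :=
        (measure_mono symmDiff_subset_union).trans (measure_union_le _ _)
    _ = 2 * μ E := by rw [measure_preimage_add_right, two_mul]

theorem mul_ofReal_rpow_neg_le_lintegral_Ioo {a r : ℝ} {c : ℝ≥0∞} {g : ℝ → ℝ≥0∞}
    (ha : -1 ≤ a) (hr : 0 < r) (hg : ∀ δ ∈ Ioo r (2 * r), c ≤ g δ) :
    c * ENNReal.ofReal (r ^ (-a)) ≤
      ENNReal.ofReal (2 ^ (a + 1)) *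
        ∫⁻ δ in Ioo r (2 * r), ENNReal.ofReal (δ ^ (-a - 1)) * g δ := by
  -- `(2r)^(-a-1)` bounds the integrand from below on an interval of length `r`
  have hreal : r ^ (-a) = 2 ^ (a + 1) * ((2 * r) ^ (-a - 1) * (2 * r - r)) := by
    rw [Real.mul_rpow zero_le_two hr.le, show 2 * r - r = r by ring, mul_assoc, ← mul_assoc,
      ← Real.rpow_add zero_lt_two, ← Real.rpow_add_one hr.ne']
    norm_num
  calc c * ENNReal.ofReal (r ^ (-a))
      = ENNReal.ofReal (2 ^ (a + 1)) * ((ENNReal.ofReal ((2 * r) ^ (-a - 1)) * c) *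
          volume (Ioo r (2 * r))) := by
        rw [hreal, Real.volume_Ioo, ENNReal.ofReal_mul (by positivity),
          ENNReal.ofReal_mul (by positivity)]
        ring
    _ = ENNReal.ofReal (2 ^ (a + 1)) *
          ∫⁻ _ in Ioo r (2 * r), ENNReal.ofReal ((2 * r) ^ (-a - 1)) * c := by
        rw [setLIntegral_const]
    _ ≤ _ := by
        refine mul_le_mul_right (setLIntegral_mono' measurableSet_Ioo fun δ hδ => ?_) _
        exact mul_le_mul' (ENNReal.ofReal_le_ofReal
          (Real.rpow_le_rpow_of_nonpos (hr.trans hδ.1) hδ.2.le (by linarith))) (hg δ hδ)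

theorem lintegral_lintegral_Ioo_norm {V : Type*} [SeminormedAddCommGroup V]
    [MeasurableSpace V] [OpensMeasurableSpace V] (μ : Measure V) [SFinite μ] {w : ℝ → ℝ≥0∞}
    (hw : Measurable w) (b : ℝ) :
    ∫⁻ t, (∫⁻ δ in Ioo ‖t‖ b, w δ) ∂μ = ∫⁻ δ in Ioo 0 b, μ (ball 0 δ) * w δ := by
  have hIoo : ∀ t : V, ∫⁻ δ in Ioo ‖t‖ b, w δ = ∫⁻ δ in Ioo 0 b, (Ioi ‖t‖).indicator w δ :=
    fun t => by
      rw [lintegral_indicator measurableSet_Ioi, Measure.restrict_restrict measurableSet_Ioi,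
        Ioi_inter_Ioo, max_eq_left (norm_nonneg t)]
  have hball : ∀ δ, ∫⁻ t, (Ioi ‖t‖).indicator w δ ∂μ = μ (ball 0 δ) * w δ := fun δ => by
    have : (fun t : V => (Ioi ‖t‖).indicator w δ) = (ball 0 δ).indicator fun _ => w δ := by
      ext t
      by_cases h : ‖t‖ < δ <;> simp [h]
    rw [this, lintegral_indicator_const measurableSet_ball, mul_comm]
  have hmeas :
      Measurable (Function.uncurry fun (t : V) (δ : ℝ) => (Ioi ‖t‖).indicator w δ) := by
    have : (Function.uncurry fun (t : V) (δ : ℝ) => (Ioi ‖t‖).indicator w δ) =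
        {p : V × ℝ | ‖p.1‖ < p.2}.indicator fun p => w p.2 := by
      ext p
      by_cases h : ‖p.1‖ < p.2 <;> simp [Function.uncurry, h]
    rw [this]
    exact (hw.comp measurable_snd).indicator
      (measurableSet_lt (continuous_norm.measurable.comp measurable_fst) measurable_snd)
  simp_rw [hIoo]
  rw [lintegral_lintegral_swap hmeas.aemeasurable]
  simp_rw [hball]

theorem setLIntegral_compl_ball_rpow_neg_lt_top {V : Type*} [NormedAddCommGroup V]
    [NormedSpace ℝ V] [MeasurableSpace V] [BorelSpace V] [FiniteDimensional ℝ V]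
    (μ : Measure V) [μ.IsAddHaarMeasure] {ρ a : ℝ} (hρ : 0 < ρ)
    (ha : (Module.finrank ℝ V : ℝ) < a) :
    ∫⁻ t in (ball 0 ρ)ᶜ, ENNReal.ofReal (‖t‖ ^ (-a)) ∂μ < ∞ := by
  have ha0 : 0 < a := lt_of_le_of_lt (Nat.cast_nonneg _) ha
  set c := 1 + ρ⁻¹
  have hdom : ∀ t ∈ (ball (0 : V) ρ)ᶜ, ‖t‖ ^ (-a) ≤ c ^ a * (1 + ‖t‖) ^ (-a) := fun t ht => by
    have hρt : ρ ≤ ‖t‖ := by simpa using ht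
    have ht0 : 0 < ‖t‖ := hρ.trans_le hρt
    have hc : 1 + ‖t‖ ≤ c * ‖t‖ := by
      have : 1 ≤ ρ⁻¹ * ‖t‖ := by rw [inv_mul_eq_div, one_le_div hρ]; exact hρt
      linarith
    calc ‖t‖ ^ (-a) = c ^ a * (c * ‖t‖) ^ (-a) := by
          rw [Real.mul_rpow (by positivity) ht0.le, ← mul_assoc,
            ← Real.rpow_add (by positivity), add_neg_cancel, Real.rpow_zero, one_mul]
      _ ≤ c ^ a * (1 + ‖t‖) ^ (-a) :=
          mul_le_mul_of_nonneg_left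
            (Real.rpow_le_rpow_of_nonpos (by positivity) hc (by linarith)) (by positivity)
  calc ∫⁻ t in (ball 0 ρ)ᶜ, ENNReal.ofReal (‖t‖ ^ (-a)) ∂μ
      ≤ ∫⁻ t in (ball 0 ρ)ᶜ,
          ENNReal.ofReal (c ^ a) * ENNReal.ofReal ((1 + ‖t‖) ^ (-a)) ∂μ :=
        setLIntegral_mono' measurableSet_ball.compl fun t ht => by
          rw [← ENNReal.ofReal_mul (by positivity)]
          exact ENNReal.ofReal_le_ofReal (hdom t ht)
    _ ≤ ENNReal.ofReal (c ^ a) * ∫⁻ t, ENNReal.ofReal ((1 + ‖t‖) ^ (-a)) ∂μ := by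
        rw [← lintegral_const_mul' _ _ ENNReal.ofReal_ne_top]
        exact setLIntegral_le_lintegral _ _
    _ < ∞ := ENNReal.mul_lt_top ENNReal.ofReal_lt_top (finite_integral_one_add_norm ha)

theorem measure_symmDiff_div_rpow_le_lintegral {V : Type*} [NormedAddCommGroup V]
    [NormedSpace ℝ V] [MeasurableSpace V] (μ : Measure V) (E : Set V) {a b : ℝ} (ha : -1 ≤ a)
    {t : V} (ht : 2 * ‖t‖ ≤ b) :
    μ (symmDiff ((· + t) ⁻¹' E) E) / ENNReal.ofReal (‖t‖ ^ a) ≤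
      ENNReal.ofReal (2 ^ (a + 1)) *
        ∫⁻ δ in Ioo ‖t‖ b, ENNReal.ofReal (δ ^ (-a - 1)) * μ (thickening δ (frontier E)) := by
  rcases eq_or_ne t 0 with rfl | ht0
  · simp
  have hr : 0 < ‖t‖ := norm_pos_iff.2 ht0
  rw [div_eq_mul_inv, ← ENNReal.ofReal_rpow_of_pos hr, ← ENNReal.rpow_neg,
    ENNReal.ofReal_rpow_of_pos hr]
  have hS : ∀ δ ∈ Ioo ‖t‖ (2 * ‖t‖),
      μ (symmDiff ((· + t) ⁻¹' E) E) ≤ μ (thickening δ (frontier E)) := fun δ hδ =>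
    measure_mono ((symmDiff_preimage_add_subset_cthickening E t).trans
      (cthickening_subset_thickening' (hr.trans hδ.1) hδ.1 _))
  exact (mul_ofReal_rpow_neg_le_lintegral_Ioo ha hr hS).trans
    (mul_le_mul_right (lintegral_mono_set (Ioo_subset_Ioo_right ht)) _)

section HaarMeasure

variable {V : Type*} [NormedAddCommGroup V] [NormedSpace ℝ V] [MeasurableSpace V]
  [BorelSpace V] [FiniteDimensional ℝ V] (μ : Measure V) [μ.IsAddHaarMeasure]

theorem setLIntegral_ball_measure_symmDiff_div_rpow_lt_top (E : Set V) {σ : ℝ} (hσ : 0 ≤ σ)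
    (hint : ∫⁻ δ in Ioo 0 1, ENNReal.ofReal (δ ^ (-σ - 1)) * μ (thickening δ (frontier E)) < ∞) :
    ∫⁻ t in ball 0 (1 / 2), μ (symmDiff ((· + t) ⁻¹' E) E) /
      ENNReal.ofReal (‖t‖ ^ ((Module.finrank ℝ V : ℝ) + σ)) ∂μ < ∞ := by
  set a := (Module.finrank ℝ V : ℝ) + σ with ha
  have ha0 : 0 ≤ a := by positivity
  set w : ℝ → ℝ≥0∞ := fun δ => ENNReal.ofReal (δ ^ (-a - 1)) * μ (thickening δ (frontier E))
  have hw : Measurable w := by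
    have : Monotone fun δ => μ (thickening δ (frontier E)) :=
      fun _ _ h => measure_mono (thickening_mono h _)
    exact Measurable.mul (by fun_prop) this.measurable
  have hball : ∀ δ ∈ Ioo (0 : ℝ) 1, μ (ball 0 δ) * w δ =
      μ (ball 0 1) * (ENNReal.ofReal (δ ^ (-σ - 1)) * μ (thickening δ (frontier E))) :=
    fun δ hδ => by
      have hpow : δ ^ Module.finrank ℝ V * δ ^ (-a - 1) = δ ^ (-σ - 1) := by
        rw [← Real.rpow_natCast, ← Real.rpow_add hδ.1, ha]
        ring_nf
      rw [Measure.addHaar_ball_of_pos μ _ hδ.1, ← hpow,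
        ENNReal.ofReal_mul (pow_nonneg hδ.1.le _)]
      ring
  calc ∫⁻ t in ball 0 (1 / 2), μ (symmDiff ((· + t) ⁻¹' E) E) / ENNReal.ofReal (‖t‖ ^ a) ∂μ
      ≤ ∫⁻ t in ball 0 (1 / 2), ENNReal.ofReal (2 ^ (a + 1)) * (∫⁻ δ in Ioo ‖t‖ 1, w δ) ∂μ :=
        setLIntegral_mono' measurableSet_ball fun t ht =>
          measure_symmDiff_div_rpow_le_lintegral μ E (by linarith)
            (by linarith [mem_ball_zero_iff.1 ht])
    _ ≤ ENNReal.ofReal (2 ^ (a + 1)) * ∫⁻ t, (∫⁻ δ in Ioo ‖t‖ 1, w δ) ∂μ := by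
        rw [← lintegral_const_mul' _ _ ENNReal.ofReal_ne_top]
        exact setLIntegral_le_lintegral _ _
    _ = ENNReal.ofReal (2 ^ (a + 1)) * (μ (ball 0 1) *
          ∫⁻ δ in Ioo 0 1, ENNReal.ofReal (δ ^ (-σ - 1)) * μ (thickening δ (frontier E))) := by
        rw [lintegral_lintegral_Ioo_norm μ hw, setLIntegral_congr_fun measurableSet_Ioo hball,
          lintegral_const_mul' _ _ measure_ball_lt_top.ne]
    _ < ∞ :=
        ENNReal.mul_lt_top ENNReal.ofReal_lt_top (ENNReal.mul_lt_top measure_ball_lt_top hint)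

theorem setLIntegral_compl_ball_measure_symmDiff_div_rpow_lt_top {E : Set V} (hE : μ E < ∞)
    {ρ a : ℝ} (hρ : 0 < ρ) (ha : (Module.finrank ℝ V : ℝ) < a) :
    ∫⁻ t in (ball 0 ρ)ᶜ, μ (symmDiff ((· + t) ⁻¹' E) E) / ENNReal.ofReal (‖t‖ ^ a) ∂μ < ∞ :=
  calc ∫⁻ t in (ball 0 ρ)ᶜ, μ (symmDiff ((· + t) ⁻¹' E) E) / ENNReal.ofReal (‖t‖ ^ a) ∂μ
      ≤ ∫⁻ t in (ball 0 ρ)ᶜ, 2 * μ E * ENNReal.ofReal (‖t‖ ^ (-a)) ∂μ :=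
        setLIntegral_mono' measurableSet_ball.compl fun t ht => by
          have hr : 0 < ‖t‖ := hρ.trans_le (by simpa using ht)
          rw [div_eq_mul_inv, ← ENNReal.ofReal_rpow_of_pos hr, ← ENNReal.rpow_neg,
            ENNReal.ofReal_rpow_of_pos hr]
          exact mul_le_mul_left (measure_symmDiff_preimage_add_le μ E t) _
    _ = 2 * μ E * ∫⁻ t in (ball 0 ρ)ᶜ, ENNReal.ofReal (‖t‖ ^ (-a)) ∂μ :=
        lintegral_const_mul' _ _ (ENNReal.mul_ne_top ENNReal.ofNat_ne_top hE.ne)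
    _ < ∞ := ENNReal.mul_lt_top (ENNReal.mul_lt_top ENNReal.ofNat_lt_top hE)
        (setLIntegral_compl_ball_rpow_neg_lt_top μ hρ ha)

end HaarMeasure

theorem stmt11_general (d : ℕ) (s q : ℝ) (hs0 : 0 < s) (hq : 1 ≤ q)
    (E : Set (EuclideanSpace ℝ (Fin d))) (hmeas : MeasurableSet E) (hfin : volume E < ⊤)
    (hint : (∫⁻ δ in Set.Ioo (0:ℝ) 1, ENNReal.ofReal (δ ^ (-(q * s) - 1)) *
        volume (thickening δ (frontier E))) < ⊤) :
    MemLp (E.indicator fun _ => (1:ℝ)) (ENNReal.ofReal q) volume ∧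
    (∫⁻ t : EuclideanSpace ℝ (Fin d),
        (eLpNorm (fun x => (E.indicator fun _ => (1:ℝ)) (x + t) -
            (E.indicator fun _ => (1:ℝ)) x) (ENNReal.ofReal q) volume) ^ q /
          ENNReal.ofReal (‖t‖ ^ ((d:ℝ) + q * s))) < ⊤ := by
  have hq0 : 0 < q := by linarith
  have hqs : 0 < q * s := mul_pos hq0 hs0
  refine ⟨memLp_indicator_const _ hmeas 1 (Or.inr hfin.ne), ?_⟩
  have hsmall := setLIntegral_ball_measure_symmDiff_div_rpow_lt_top volume E hqs.le hint
  have hlarge := setLIntegral_compl_ball_measure_symmDiff_div_rpow_lt_top volume hfin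
    (ρ := 1 / 2) one_half_pos (lt_add_of_pos_right (Module.finrank ℝ _ : ℝ) hqs)
  rw [finrank_euclideanSpace_fin] at hsmall hlarge
  have hdiff : ∀ t, eLpNorm (fun x => E.indicator (fun _ => (1 : ℝ)) (x + t) -
      E.indicator (fun _ => 1) x) (ENNReal.ofReal q) volume ^ q =
        volume (symmDiff ((· + t) ⁻¹' E) E) := fun t =>
    eLpNorm_indicator_sub_indicator_rpow (measurable_add_const t hmeas) hmeas hq0
  simp_rw [hdiff]
  rw [← lintegral_add_compl _ measurableSet_ball]
  exact ENNReal.add_lt_top.2 ⟨hsmall, hlarge⟩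

/-- Let `0 < s < 1`, `1 ≤ q < ∞`, and `E ⊂ ℝ^d` measurable with `|E| < ∞`.
If `∫₀¹ δ^{-qs} |(∂E)_δ| dδ/δ < ∞`, then `χ_E ∈ W^q_s(ℝ^d)`, i.e. `χ_E ∈ L^q` and the
Gagliardo seminorm `∫ ‖χ_E(·+t) - χ_E‖_q^q / |t|^{d+qs} dt` is finite. -/
theorem stmt11 (d : ℕ) (hd : 0 < d) (s q : ℝ) (hs0 : 0 < s) (hs1 : s < 1) (hq : 1 ≤ q)
    (E : Set (EuclideanSpace ℝ (Fin d))) (hmeas : MeasurableSet E) (hfin : volume E < ⊤)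
    (hint : (∫⁻ δ in Set.Ioo (0:ℝ) 1, ENNReal.ofReal (δ ^ (-(q * s) - 1)) *
        volume (thickening δ (frontier E))) < ⊤) :
    MemLp (E.indicator fun _ => (1:ℝ)) (ENNReal.ofReal q) volume ∧
    (∫⁻ t : EuclideanSpace ℝ (Fin d),
        (eLpNorm (fun x => (E.indicator fun _ => (1:ℝ)) (x + t) -
            (E.indicator fun _ => (1:ℝ)) x) (ENNReal.ofReal q) volume) ^ q /
          ENNReal.ofReal (‖t‖ ^ ((d:ℝ) + q * s))) < ⊤ :=
  stmt11_general d s q hs0 hq E hmeas hfin hint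
end

section
/- Let p, d ≥ 1 and λ > 0, and suppose a family of measurable functions g_k : ℝ^d → [0,∞), k ∈ ℤ, satisfies ‖g_k‖_{L^1} ≤ A·2^{kγ/2} and ‖g_k‖_{L^2} ≤ A·2^{−k(d−γ)/2} for some 0 < γ < d and A > 0. Then the function G = ∑_{k∈ℤ} g_k satisfies |{x : G(x) > λ}| ≤ C A^{2d/(2d−γ)} λ^{−2d/(2d−γ)} for all λ > 0, i.e. G ∈ L^{2d/(2d−γ),∞}. -/
/-!
Split `∑ₖ gₖ` at a dyadic scale `N`. The low part `∑_{k ≤ N} gₖ` has `L¹` norm `≲ A 2^{Nγ/2}` and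
the high part `∑_{k > N} gₖ` has `L²` norm `≲ A 2^{-N(d-γ)/2}` (both geometric series), so Markov's
inequality for the first and Chebyshev's for the second bound `|{G > λ}|` by
`A 2^{Nγ/2} / λ + A² 2^{-N(d-γ)} / λ²`. Taking `2^N ≈ (A/λ)^{2/(2d-γ)}` makes both terms
`≲ (A/λ)^{2d/(2d-γ)}`.
-/

open MeasureTheory
open scoped ENNReal

theorem ENNReal.iSup_rpow {ι : Sort*} (f : ι → ℝ≥0∞) {y : ℝ} (hy : 0 < y) :
    (⨆ i, f i) ^ y = ⨆ i, f i ^ y :=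
  (ENNReal.orderIsoRpow y hy).map_iSup f

theorem ENNReal.tsum_int_eq_tsum_le_add_tsum_gt (F : ℤ → ℝ≥0∞) (N : ℤ) :
    ∑' k, F k = ∑' j : ℕ, F (N - j) + ∑' j : ℕ, F (N + 1 + j) := by
  rw [← (Equiv.addRight (N + 1)).tsum_eq,
    tsum_of_nat_of_neg_add_one ENNReal.summable ENNReal.summable, add_comm]
  congr 1 <;> refine tsum_congr fun j => congrArg F ?_ <;> simp only [Equiv.coe_addRight] <;> ring

theorem inv_one_sub_two_rpow_neg_pos {c : ℝ} (hc : 0 < c) : 0 < (1 - (2 : ℝ) ^ (-c))⁻¹ :=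
  inv_pos.2 (sub_pos.2 (Real.rpow_lt_one_of_one_lt_of_neg one_lt_two (neg_neg_of_pos hc)))

theorem tsum_ofReal_mul_two_rpow_sub {A c : ℝ} (hA : 0 ≤ A) (hc : 0 < c) (x : ℝ) :
    ∑' j : ℕ, ENNReal.ofReal (A * 2 ^ (x - j * c)) =
      ENNReal.ofReal (A * 2 ^ x * (1 - 2 ^ (-c))⁻¹) := by
  have hr0 : (0 : ℝ) ≤ 2 ^ (-c) := by positivity
  have hr1 : (2 : ℝ) ^ (-c) < 1 := Real.rpow_lt_one_of_one_lt_of_neg one_lt_two (neg_neg_of_pos hc)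
  have hterm : ∀ j : ℕ, A * (2 : ℝ) ^ (x - j * c) = A * 2 ^ x * (2 ^ (-c)) ^ j := fun j => by
    rw [sub_eq_add_neg, Real.rpow_add two_pos, ← Real.rpow_natCast, ← Real.rpow_mul two_pos.le,
      mul_assoc, neg_mul_eq_mul_neg, mul_comm (j : ℝ)]
  simp only [hterm]
  rw [← ENNReal.ofReal_tsum_of_nonneg (fun j => by positivity)
      ((summable_geometric_of_lt_one hr0 hr1).mul_left _),
    tsum_mul_left, tsum_geometric_of_lt_one hr0 hr1]

section DyadicScale
variable {s a b : ℝ} {N : ℤ}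

theorem mul_two_rpow_mul_le (hs : 0 < s) (ha : 0 ≤ a) (hab : 0 < a + 2 * b)
    (hN : (2 : ℝ) ^ N ≤ s ^ (a + 2 * b)⁻¹) :
    s * 2 ^ ((N : ℝ) * a) ≤ s ^ (2 * (a + b) / (a + 2 * b)) := by
  rw [← Real.rpow_intCast] at hN
  calc s * 2 ^ ((N : ℝ) * a) = s * ((2 : ℝ) ^ (N : ℝ)) ^ a := by rw [Real.rpow_mul two_pos.le]
    _ ≤ s * (s ^ (a + 2 * b)⁻¹) ^ a := by gcongr
    _ = s ^ (2 * (a + b) / (a + 2 * b)) := by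
      nth_rewrite 1 [← Real.rpow_one s]
      rw [← Real.rpow_mul hs.le, ← Real.rpow_add hs]
      congr 1
      field_simp
      ring

theorem sq_mul_two_rpow_neg_mul_le (hs : 0 < s) (hb : 0 ≤ b) (hab : 0 < a + 2 * b)
    (hN : s ^ (a + 2 * b)⁻¹ < (2 : ℝ) ^ (N + 1)) :
    (s * 2 ^ (-(((N : ℝ) + 1) * b))) ^ 2 ≤ s ^ (2 * (a + b) / (a + 2 * b)) := by
  rw [← Real.rpow_intCast, Int.cast_add, Int.cast_one] at hN
  calc (s * 2 ^ (-(((N : ℝ) + 1) * b))) ^ 2 = (s * ((2 : ℝ) ^ ((N : ℝ) + 1)) ^ (-b)) ^ 2 := by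
        rw [← Real.rpow_mul two_pos.le, mul_neg]
    _ ≤ (s * (s ^ (a + 2 * b)⁻¹) ^ (-b)) ^ 2 := by
        have := Real.rpow_le_rpow_of_nonpos (by positivity) hN.le (neg_nonpos.2 hb)
        gcongr
    _ = s ^ (2 * (a + b) / (a + 2 * b)) := by
      nth_rewrite 1 [← Real.rpow_one s]
      rw [← Real.rpow_mul hs.le, ← Real.rpow_add hs, ← Real.rpow_natCast, ← Real.rpow_mul hs.le]
      congr 1
      field_simp
      ring

end DyadicScale

section WeakType
variable {α : Type*} [MeasurableSpace α] {μ : Measure α}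

theorem eLpNorm_iSup_of_monotone {p : ℝ≥0∞} {f : ℕ → α → ℝ≥0∞}
    (hf : ∀ n, AEMeasurable (f n) μ) (hmono : Monotone f) (hp0 : p ≠ 0) (hp : p ≠ ∞) :
    eLpNorm (⨆ n, f n) p μ = ⨆ n, eLpNorm (f n) p μ := by
  have hp' : 0 < p.toReal := ENNReal.toReal_pos hp0 hp
  simp only [eLpNorm_eq_lintegral_rpow_enorm_toReal hp0 hp, enorm_eq_self, iSup_apply,
    ENNReal.iSup_rpow _ hp']
  rw [lintegral_iSup' (fun n => (hf n).pow_const _)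
    (ae_of_all _ fun x m n hmn => ENNReal.rpow_le_rpow (hmono hmn x) hp'.le),
    ENNReal.iSup_rpow _ (one_div_pos.2 hp')]

theorem eLpNorm_tsum_le {p : ℝ≥0∞} {f : ℕ → α → ℝ≥0∞} (hf : ∀ n, AEMeasurable (f n) μ)
    (hp1 : 1 ≤ p) (hp : p ≠ ∞) :
    eLpNorm (fun x => ∑' n, f n x) p μ ≤ ∑' n, eLpNorm (f n) p μ := by
  have hsum : (fun x => ∑' n, f n x) = ⨆ n, ∑ i ∈ Finset.range n, f i := by
    ext x
    simp only [ENNReal.tsum_eq_iSup_nat, iSup_apply, Finset.sum_apply]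
  rw [hsum, eLpNorm_iSup_of_monotone (fun n => Finset.aemeasurable_sum _ fun i _ => hf i)
    (fun m n hmn => Finset.sum_le_sum_of_subset (Finset.range_subset_range.2 hmn))
    (zero_lt_one.trans_le hp1).ne' hp]
  exact iSup_le fun n => (eLpNorm_sum_le (fun i _ => (hf i).aestronglyMeasurable) hp1).trans
    (ENNReal.sum_le_tsum _)

theorem measure_add_lt_add_le (F G : α → ℝ≥0∞) (u v : ℝ≥0∞) :
    μ {x | u + v < F x + G x} ≤ μ {x | u ≤ F x} + μ {x | v ≤ G x} := by
  refine (measure_mono fun x hx => ?_).trans (measure_union_le _ _)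
  by_contra h
  simp only [Set.mem_union, Set.mem_ofPred_eq, not_or, not_le] at h
  exact (ENNReal.add_lt_add h.1 h.2).not_gt hx

theorem measure_ge_le_inv_mul_eLpNorm_one {F : α → ℝ≥0∞} (hF : AEMeasurable F μ) {u : ℝ≥0∞}
    (hu0 : u ≠ 0) (hu : u ≠ ∞) : μ {x | u ≤ F x} ≤ u⁻¹ * eLpNorm F 1 μ := by
  simpa using meas_ge_le_mul_pow_eLpNorm_enorm μ one_ne_zero ENNReal.one_ne_top
    hF.aestronglyMeasurable hu0 (absurd · hu)

theorem measure_ge_le_inv_mul_eLpNorm_two_sq {F : α → ℝ≥0∞} (hF : AEMeasurable F μ)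
    {u : ℝ≥0∞} (hu0 : u ≠ 0) (hu : u ≠ ∞) : μ {x | u ≤ F x} ≤ (u⁻¹ * eLpNorm F 2 μ) ^ 2 := by
  simpa [mul_pow] using meas_ge_le_mul_pow_eLpNorm_enorm μ two_ne_zero ENNReal.ofNat_ne_top
    hF.aestronglyMeasurable hu0 (absurd · hu)

theorem measure_add_lt_tsum_int_le (f : ℤ → α → ℝ≥0∞) (hf : ∀ k, AEMeasurable (f k) μ) (N : ℤ)
    {u v : ℝ≥0∞} (hu0 : u ≠ 0) (hu : u ≠ ∞) (hv0 : v ≠ 0) (hv : v ≠ ∞) :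
    μ {x | u + v < ∑' k, f k x} ≤ u⁻¹ * ∑' j : ℕ, eLpNorm (f (N - j)) 1 μ +
      (v⁻¹ * ∑' j : ℕ, eLpNorm (f (N + 1 + j)) 2 μ) ^ 2 := by
  simp only [ENNReal.tsum_int_eq_tsum_le_add_tsum_gt _ N]
  refine (measure_add_lt_add_le _ _ u v).trans (add_le_add ?_ ?_)
  · refine (measure_ge_le_inv_mul_eLpNorm_one (.tsum fun j => hf _) hu0 hu).trans ?_
    gcongr
    exact eLpNorm_tsum_le (fun j => hf _) le_rfl ENNReal.one_ne_top
  · refine (measure_ge_le_inv_mul_eLpNorm_two_sq (.tsum fun j => hf _) hv0 hv).trans ?_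
    gcongr
    exact eLpNorm_tsum_le (fun j => hf _) one_le_two ENNReal.ofNat_ne_top

theorem measure_lt_tsum_le_of_eLpNorm_le_two_rpow {a b A l : ℝ} (ha : 0 < a) (hb : 0 < b)
    (hA : 0 < A) (hl : 0 < l) (f : ℤ → α → ℝ≥0∞) (hf : ∀ k, AEMeasurable (f k) μ)
    (h1 : ∀ k : ℤ, eLpNorm (f k) 1 μ ≤ ENNReal.ofReal (A * 2 ^ ((k : ℝ) * a)))
    (h2 : ∀ k : ℤ, eLpNorm (f k) 2 μ ≤ ENNReal.ofReal (A * 2 ^ (-((k : ℝ) * b)))) :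
    μ {x | ENNReal.ofReal l < ∑' k, f k x} ≤
      ENNReal.ofReal ((2 * (1 - 2 ^ (-a))⁻¹ + 4 * (1 - 2 ^ (-b))⁻¹ ^ 2) *
        (A / l) ^ (2 * (a + b) / (a + 2 * b))) := by
  set s := A / l
  set p := 2 * (a + b) / (a + 2 * b)
  have hs : 0 < s := div_pos hA hl
  have hab : 0 < a + 2 * b := by positivity
  have hc₁ := inv_one_sub_two_rpow_neg_pos ha
  have hc₂ := inv_one_sub_two_rpow_neg_pos hb
  set c₁ := (1 - (2 : ℝ) ^ (-a))⁻¹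
  set c₂ := (1 - (2 : ℝ) ^ (-b))⁻¹
  -- the scale at which the `L¹` and `L²` contributions balance
  obtain ⟨N, hN, hN'⟩ := exists_mem_Ico_zpow (Real.rpow_pos_of_pos hs (a + 2 * b)⁻¹) one_lt_two
  have hlow : ∑' j : ℕ, eLpNorm (f (N - j)) 1 μ ≤
      ENNReal.ofReal (A * 2 ^ ((N : ℝ) * a) * c₁) := by
    rw [← tsum_ofReal_mul_two_rpow_sub hA.le ha]
    refine ENNReal.tsum_le_tsum fun j => (h1 _).trans_eq ?_
    congr 3
    push_cast
    ring
  have hhigh : ∑' j : ℕ, eLpNorm (f (N + 1 + j)) 2 μ ≤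
      ENNReal.ofReal (A * 2 ^ (-(((N : ℝ) + 1) * b)) * c₂) := by
    rw [← tsum_ofReal_mul_two_rpow_sub hA.le hb]
    refine ENNReal.tsum_le_tsum fun j => (h2 _).trans_eq ?_
    congr 3
    push_cast
    ring
  have hl2 : 0 < l / 2 := half_pos hl
  have hl2₀ : ENNReal.ofReal (l / 2) ≠ 0 := (ENNReal.ofReal_pos.2 hl2).ne'
  calc μ {x | ENNReal.ofReal l < ∑' k, f k x}
      = μ {x | ENNReal.ofReal (l / 2) + ENNReal.ofReal (l / 2) < ∑' k, f k x} := by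
        rw [← ENNReal.ofReal_add hl2.le hl2.le, add_halves]
    _ ≤ (ENNReal.ofReal (l / 2))⁻¹ * ENNReal.ofReal (A * 2 ^ ((N : ℝ) * a) * c₁) +
        ((ENNReal.ofReal (l / 2))⁻¹ *
          ENNReal.ofReal (A * 2 ^ (-(((N : ℝ) + 1) * b)) * c₂)) ^ 2 := by
        refine (measure_add_lt_tsum_int_le f hf N hl2₀ ENNReal.ofReal_ne_top hl2₀
          ENNReal.ofReal_ne_top).trans ?_
        gcongr
    _ = ENNReal.ofReal (2 * c₁ * (s * 2 ^ ((N : ℝ) * a)) +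
        4 * c₂ ^ 2 * (s * 2 ^ (-(((N : ℝ) + 1) * b))) ^ 2) := by
        rw [← ENNReal.ofReal_inv_of_pos hl2, ← ENNReal.ofReal_mul (inv_nonneg.2 hl2.le),
          ← ENNReal.ofReal_mul (inv_nonneg.2 hl2.le), ← ENNReal.ofReal_pow (by positivity),
          ← ENNReal.ofReal_add (by positivity) (by positivity)]
        congr 1
        simp only [s]
        field_simp
        ring
    _ ≤ ENNReal.ofReal (2 * c₁ * s ^ p + 4 * c₂ ^ 2 * s ^ p) := by
        gcongr
        · exact mul_two_rpow_mul_le hs ha.le hab hN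
        · exact sq_mul_two_rpow_neg_mul_le hs hb.le hab hN'
    _ = _ := by rw [add_mul, mul_assoc, mul_assoc]

end WeakType

theorem stmt19_general (d : ℕ) (γ : ℝ) (hγ0 : 0 < γ) (hγd : γ < d) :
    ∃ C : ℝ, 0 < C ∧ ∀ A : ℝ, 0 < A →
      ∀ g : ℤ → EuclideanSpace ℝ (Fin d) → ℝ,
        (∀ k, Measurable (g k)) → (∀ k x, 0 ≤ g k x) →
        (∀ k : ℤ, eLpNorm (g k) 1 volume ≤ ENNReal.ofReal (A * (2:ℝ) ^ ((k:ℝ) * γ / 2))) →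
        (∀ k : ℤ, eLpNorm (g k) 2 volume ≤
          ENNReal.ofReal (A * (2:ℝ) ^ (-(k:ℝ) * ((d:ℝ) - γ) / 2))) →
        ∀ l : ℝ, 0 < l →
          volume {x : EuclideanSpace ℝ (Fin d) |
              ENNReal.ofReal l < ∑' k : ℤ, ENNReal.ofReal (g k x)}
            ≤ ENNReal.ofReal (C * A ^ (2 * d / (2 * d - γ)) * l ^ (-(2 * d / (2 * d - γ)))) := by
  have ha : 0 < γ / 2 := half_pos hγ0
  have hb : 0 < ((d : ℝ) - γ) / 2 := half_pos (sub_pos.2 hγd)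
  have hc₁ := inv_one_sub_two_rpow_neg_pos ha
  have hc₂ := inv_one_sub_two_rpow_neg_pos hb
  refine ⟨2 * (1 - 2 ^ (-(γ / 2)))⁻¹ + 4 * (1 - 2 ^ (-(((d : ℝ) - γ) / 2)))⁻¹ ^ 2,
    by positivity, fun A hA g hgm hg0 hg1 hg2 l hl => ?_⟩
  have key := measure_lt_tsum_le_of_eLpNorm_le_two_rpow ha hb hA hl (fun k x => ‖g k x‖ₑ)
    (fun k => (hgm k).enorm.aemeasurable)
    (fun k => by rw [eLpNorm_enorm, ← mul_div_assoc]; exact hg1 k)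
    (fun k => by rw [eLpNorm_enorm, neg_mul_eq_neg_mul, ← mul_div_assoc]; exact hg2 k)
  have hp : 2 * (γ / 2 + ((d : ℝ) - γ) / 2) / (γ / 2 + 2 * (((d : ℝ) - γ) / 2)) =
      2 * d / (2 * d - γ) := by
    field_simp
    ring
  simp only [Real.enorm_eq_ofReal (hg0 _ _)] at key
  rw [hp, Real.div_rpow hA.le hl.le] at key
  rwa [Real.rpow_neg hl.le, mul_assoc, ← div_eq_mul_inv (A ^ _)]

/-- Suppose `g_k : ℝ^d → [0,∞)`, `k ∈ ℤ`, are measurable with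
`‖g_k‖₁ ≤ A 2^{kγ/2}` and `‖g_k‖₂ ≤ A 2^{-k(d-γ)/2}` for some `0 < γ < d`, `A > 0`. Then
`G = ∑_k g_k` satisfies `|{G > λ}| ≤ C A^{2d/(2d-γ)} λ^{-2d/(2d-γ)}` for all `λ > 0`,
i.e. `G ∈ L^{2d/(2d-γ),∞}`. -/
theorem stmt19 (d : ℕ) (hd : 1 ≤ d) (γ : ℝ) (hγ0 : 0 < γ) (hγd : γ < d) :
    ∃ C : ℝ, 0 < C ∧ ∀ A : ℝ, 0 < A →
      ∀ g : ℤ → EuclideanSpace ℝ (Fin d) → ℝ,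
        (∀ k, Measurable (g k)) → (∀ k x, 0 ≤ g k x) →
        (∀ k : ℤ, eLpNorm (g k) 1 volume ≤ ENNReal.ofReal (A * (2:ℝ) ^ ((k:ℝ) * γ / 2))) →
        (∀ k : ℤ, eLpNorm (g k) 2 volume ≤
          ENNReal.ofReal (A * (2:ℝ) ^ (-(k:ℝ) * ((d:ℝ) - γ) / 2))) →
        ∀ l : ℝ, 0 < l →
          volume {x : EuclideanSpace ℝ (Fin d) |
              ENNReal.ofReal l < ∑' k : ℤ, ENNReal.ofReal (g k x)}
            ≤ ENNReal.ofReal (C * A ^ (2 * d / (2 * d - γ)) * l ^ (-(2 * d / (2 * d - γ)))) :=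
  stmt19_general d γ hγ0 hγd
end
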